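/- Let S be an (n, m, lambda, mu)-partial difference set for G with lambda != mu (so S is reversible, i.e. -S = S), and let F be the biangular G-harmonic frame for C^m generated by S. Then: (1) if 0_G is in S, the G-harmonic frame for C^{m-1} generated by S \ {0_G} is either equiangular or biangular; and (2) if 0_G is not in S, the G-harmonic frame for C^{m+1} generated by S union {0_G} is either equiangular or biangular. -/

import Mathlib

/-!
The angle `|⟨f_x, f_y⟩|` is `|ψ(S)| / m`, where `ψ = ρ_{y-x}` is a nontrivial character and
`ψ(S) = ∑_{s ∈ S} ψ(s)`. Counting differences in the partial difference set `S` gives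
`|ψ(S)|² = (λ - μ) ψ(S ∪ {0}) + m - λ`. As `λ ≠ μ`, this forces `ψ(S)` to be real, hence a
root of one fixed monic quadratic, so there are at most two angles. Removing `0` from `S`, or
adjoining it, shifts every `ψ(S)` by the same constant `∓1`, so the new character sums are again
the roots of a monic quadratic.
-/

open Finset

/-- The underlying finite abelian group `G = ZMod n₁ ⊕ ... ⊕ ZMod n_k`
(a fixed cyclic decomposition). -/
abbrev PiG {k : ℕ} (nn : Fin k → ℕ) : Type := ∀ i, ZMod (nn i)

/-- The character `ρ_x(y) = exp(2πi (x(1)y(1)/n₁ + ... + x(k)y(k)/n_k))`. -/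
noncomputable def rho {k : ℕ} (nn : Fin k → ℕ) (x y : PiG nn) : ℂ :=
  Complex.exp (2 * (Real.pi : ℂ) * Complex.I *
    ∑ i, ((x i).val : ℂ) * ((y i).val : ℂ) / ((nn i : ℕ) : ℂ))

/-- The vector `f_x = (1/√m) (ρ_{g_j}(x))_{j=1}^m` of the `G`-harmonic frame
generated by `S = {g_1, ..., g_m}`. -/
noncomputable def harm {k m : ℕ} (nn : Fin k → ℕ) (g : Fin m → PiG nn) (x : PiG nn) :
    EuclideanSpace ℂ (Fin m) :=
  (WithLp.equiv 2 (Fin m → ℂ)).symm fun j => ((Real.sqrt m : ℝ) : ℂ)⁻¹ * rho nn (g j) x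

/-- The frame angle `|⟨f_x, f_y⟩|`. -/
noncomputable def ang {k m : ℕ} (nn : Fin k → ℕ) (g : Fin m → PiG nn) (x y : PiG nn) : ℝ :=
  ‖(inner ℂ (harm nn g x) (harm nn g y) : ℂ)‖

/-- The set of frame angles `Θ = { |⟨f_x, f_y⟩| : x ≠ y }` of the harmonic frame. -/
noncomputable def anglesSet {k m : ℕ} (nn : Fin k → ℕ) (g : Fin m → PiG nn) : Set ℝ :=
  {r : ℝ | ∃ x y : PiG nn, x ≠ y ∧ ang nn g x y = r}

/-- The harmonic frame is a tight frame (with the forced constant `n/m`):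
`∑_x f_x ⊗ f_x^* = (n/m) I_m` as operators. -/
noncomputable def IsTightHarm {k m : ℕ} (nn : Fin k → ℕ) [∀ i, NeZero (nn i)]
    (g : Fin m → PiG nn) : Prop :=
  ∀ v : EuclideanSpace ℂ (Fin m),
    ∑ x : PiG nn, (inner ℂ (harm nn g x) v : ℂ) • harm nn g x =
      ((Fintype.card (PiG nn) : ℂ) / (m : ℂ)) • v

/-- `diffCount g x` is the number of ways to write `x = g_a - g_b` with `g_a ≠ g_b`
distinct elements of `S = {g_1, ..., g_m}`. -/
noncomputable def diffCount {G : Type*} [AddCommGroup G] {m : ℕ} (g : Fin m → G) (x : G) : ℕ :=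
  Nat.card {p : Fin m × Fin m // p.1 ≠ p.2 ∧ g p.1 - g p.2 = x}

lemma AddChar.map_sub_eq_mul_conj {G : Type*} [AddCommGroup G] [Finite G] (ψ : AddChar G ℂ)
    (x y : G) : ψ (x - y) = ψ x * starRingEnd ℂ (ψ y) := by
  rw [AddChar.map_sub_eq_div, div_eq_mul_inv, AddChar.inv_apply_eq_conj]

lemma ncard_le_two_of_sq_eq {K : Type*} [Field K] (b c : K) {s : Set K}
    (hs : ∀ x ∈ s, x ^ 2 = b * x + c) : s.ncard ≤ 2 := by
  by_contra! h
  obtain ⟨x, y, w, hx, hy, hw, hxy, hxw, hyw⟩ :=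
    (Set.two_lt_ncard_iff (Set.finite_of_ncard_pos (by omega))).1 h
  have hsum : ∀ {u v : K}, u ∈ s → v ∈ s → u ≠ v → u + v = b := by
    intro u v hu hv huv
    have : (u - v) * (u + v - b) = 0 := by linear_combination hs _ hu - hs _ hv
    exact sub_eq_zero.1 ((mul_eq_zero.1 this).resolve_left (sub_ne_zero.2 huv))
  exact hyw (add_left_cancel ((hsum hx hy hxy).trans (hsum hx hw hxw).symm))

lemma Complex.sq_eq_of_mul_conj_eq {σ : ℂ} {c e r : ℝ} (hc : c ≠ 0)
    (h : σ * starRingEnd ℂ σ = c * (σ + e) + r) : σ ^ 2 = c * σ + (c * e + r) := by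
  have hconj := congrArg (starRingEnd ℂ) h
  simp only [map_mul, map_add, Complex.conj_ofReal, Complex.conj_conj] at hconj
  have hreal : starRingEnd ℂ σ = σ := by
    have : (c : ℂ) * (σ - starRingEnd ℂ σ) = 0 := by linear_combination hconj - h
    exact (sub_eq_zero.1 ((mul_eq_zero.1 this).resolve_left (Complex.ofReal_ne_zero.2 hc))).symm
  rw [hreal] at h
  linear_combination h

section Characters

variable {k : ℕ} (nn : Fin k → ℕ) [∀ i, NeZero (nn i)]

omit [∀ i, NeZero (nn i)] in
lemma rho_comm (x y : PiG nn) : rho nn x y = rho nn y x := by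
  simp only [rho, mul_comm ((x _).val : ℂ)]

omit [∀ i, NeZero (nn i)] in
lemma rho_zero_left (y : PiG nn) : rho nn 0 y = 1 := by
  simp [rho]

lemma rho_eq_prod (x y : PiG nn) : rho nn x y = ∏ i, ZMod.stdAddChar (x i * y i) := by
  simp only [rho, Finset.mul_sum, Complex.exp_sum, ZMod.stdAddChar_apply]
  refine Finset.prod_congr rfl fun i _ => ?_
  have hval : x i * y i = (((x i).val * (y i).val : ℕ) : ZMod (nn i)) := by
    simp only [Nat.cast_mul, ZMod.natCast_zmod_val]
  rw [hval, ZMod.toCircle_natCast, Nat.cast_mul, mul_div_assoc, mul_div_assoc, mul_div_assoc]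

noncomputable def rhoChar (x : PiG nn) : AddChar (PiG nn) ℂ where
  toFun := rho nn x
  map_zero_eq_one' := by simp [rho_eq_prod]
  map_add_eq_mul' a b := by
    simp only [rho_eq_prod, Pi.add_apply, mul_add, AddChar.map_add_eq_mul, Finset.prod_mul_distrib]

@[simp]
lemma rhoChar_apply (x y : PiG nn) : rhoChar nn x y = rho nn x y := rfl

lemma rhoChar_ne_one {x : PiG nn} (hx : x ≠ 0) : rhoChar nn x ≠ 1 := by
  obtain ⟨i, hi⟩ := Function.ne_iff.1 hx
  intro h
  have h1 : rho nn x (Pi.single i 1) = 1 := by rw [← rhoChar_apply, h, AddChar.one_apply]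
  rw [rho_eq_prod,
    Finset.prod_eq_single i (fun j _ hj => by simp [Pi.single_eq_of_ne hj]) (by simp),
    Pi.single_eq_same, mul_one, ← AddChar.map_zero_eq_one (ZMod.stdAddChar (N := nn i))] at h1
  exact hi (ZMod.injective_stdAddChar h1)

end Characters

section Frame

variable {k m : ℕ} (nn : Fin k → ℕ) [∀ i, NeZero (nn i)] (g : Fin m → PiG nn)

lemma inner_harm (x y : PiG nn) :
    inner ℂ (harm nn g x) (harm nn g y) = (m : ℂ)⁻¹ * ∑ j, rho nn (g j) (y - x) := by
  have hsqrt :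
      starRingEnd ℂ ((Real.sqrt m : ℂ)⁻¹) * (Real.sqrt m : ℂ)⁻¹ = (m : ℂ)⁻¹ := by
    rw [map_inv₀, Complex.conj_ofReal, ← mul_inv, ← Complex.ofReal_mul,
      Real.mul_self_sqrt (Nat.cast_nonneg m), Complex.ofReal_natCast]
  simp only [harm, PiLp.inner_apply, RCLike.inner_apply, WithLp.equiv_symm_apply,
    Finset.mul_sum, map_mul, ← rhoChar_apply, AddChar.map_sub_eq_mul_conj]
  refine Finset.sum_congr rfl fun j _ => ?_
  rw [← hsqrt]
  ring

lemma ang_eq (x y : PiG nn) : ang nn g x y = ‖∑ j, rho nn (g j) (y - x)‖ / m := by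
  rw [ang, inner_harm, norm_mul, norm_inv, Complex.norm_natCast, inv_mul_eq_div]

lemma anglesSet_eq :
    anglesSet nn g = (fun z => ‖∑ j, rho nn (g j) z‖ / m) '' {z | z ≠ 0} := by
  ext r
  constructor
  · rintro ⟨x, y, hxy, rfl⟩
    exact ⟨y - x, sub_ne_zero.2 hxy.symm, (ang_eq nn g x y).symm⟩
  · rintro ⟨z, hz, rfl⟩
    exact ⟨0, z, hz.symm, by rw [ang_eq, sub_zero]⟩

lemma ncard_anglesSet_pos (hG : ∃ z : PiG nn, z ≠ 0) : 0 < (anglesSet nn g).ncard := by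
  obtain ⟨z, hz⟩ := hG
  rw [anglesSet_eq]
  exact (Set.ncard_pos ((Set.toFinite _).image _)).2 ⟨_, z, hz, rfl⟩

lemma ncard_anglesSet_le_two (b c : ℂ)
    (hquad : ∀ z : PiG nn, z ≠ 0 →
      (∑ j, rho nn (g j) z) ^ 2 = b * ∑ j, rho nn (g j) z + c) :
    (anglesSet nn g).ncard ≤ 2 := by
  have himage : anglesSet nn g =
      (fun t : ℂ => ‖t‖ / m) '' ((fun z => ∑ j, rho nn (g j) z) '' {z | z ≠ 0}) := by
    rw [anglesSet_eq, Set.image_image]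
  rw [himage]
  refine (Set.ncard_image_le ((Set.toFinite _).image _)).trans
    (ncard_le_two_of_sq_eq b c ?_)
  rintro _ ⟨z, hz, rfl⟩
  exact hquad z hz

end Frame

section PartialDifferenceSet

variable {G : Type*} [AddCommGroup G] {m : ℕ} (g : Fin m → G)

def IsPartialDifferenceSet (lam mu : ℕ) : Prop :=
  (∀ x ∈ insert (0 : G) (Set.range g), x ≠ 0 → diffCount g x = lam) ∧
    ∀ x : G, x ∉ insert (0 : G) (Set.range g) → diffCount g x = mu

variable {g}

lemma diffCount_zero (hg : Function.Injective g) : diffCount g 0 = 0 :=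
  Nat.card_eq_zero.2 (Or.inl ⟨fun ⟨_, hne, h⟩ => hne (hg (sub_eq_zero.1 h))⟩)

variable (g)

lemma sum_mul_conj_sum_eq_sum_sub [Finite G] (ψ : AddChar G ℂ) :
    (∑ j, ψ (g j)) * starRingEnd ℂ (∑ j, ψ (g j)) =
      ∑ p : Fin m × Fin m, ψ (g p.1 - g p.2) := by
  simp only [map_sum, Finset.sum_mul_sum, Fintype.sum_prod_type, AddChar.map_sub_eq_mul_conj]

lemma sum_sub_eq_sum_diffCount [Fintype G] {R : Type*} [CommRing R] (ψ : AddChar G R) :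
    ∑ p : Fin m × Fin m, ψ (g p.1 - g p.2) = m + ∑ d, diffCount g d • ψ d := by
  classical
  rw [← Finset.sum_filter_add_sum_filter_not Finset.univ (fun p : Fin m × Fin m => p.1 = p.2)]
  congr 1
  · have hdiag : {p ∈ (Finset.univ : Finset (Fin m × Fin m)) | p.1 = p.2} =
        (Finset.univ : Finset (Fin m)).diag := by
      rw [Finset.diag_eq_filter, Finset.univ_product_univ]
    rw [Finset.sum_congr rfl fun p hp => by rw [(Finset.mem_filter.1 hp).2, sub_self,
      AddChar.map_zero_eq_one], Finset.sum_const, hdiag, Finset.diag_card, Finset.card_univ,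
      Fintype.card_fin, nsmul_one]
  · rw [← Finset.sum_fiberwise _ (fun p : Fin m × Fin m => g p.1 - g p.2)]
    refine Finset.sum_congr rfl fun d _ => ?_
    rw [Finset.sum_congr rfl fun p hp => by rw [(Finset.mem_filter.1 hp).2], Finset.sum_const,
      Finset.filter_filter, diffCount, Nat.card_eq_fintype_card, Fintype.card_subtype]

variable [Fintype G] [DecidableEq G] {g}

lemma IsPartialDifferenceSet.sum_mul_conj_sum {lam mu : ℕ}
    (hpds : IsPartialDifferenceSet g lam mu)
    (hg : Function.Injective g) {ψ : AddChar G ℂ} (hψ : ψ ≠ 1) :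
    (∑ j, ψ (g j)) * starRingEnd ℂ (∑ j, ψ (g j)) =
      ((lam : ℂ) - mu) * ∑ d ∈ insert 0 (Finset.univ.image g), ψ d + ((m : ℂ) - lam) := by
  set S₀ := insert 0 (Finset.univ.image g)
  have hS₀ : ∀ d, d ∈ S₀ ↔ d ∈ insert (0 : G) (Set.range g) := by simp [S₀]
  have hcount : ∀ d, (diffCount g d • ψ d : ℂ) = (mu : ℂ) * ψ d +
      ((lam : ℂ) - mu) * (if d ∈ S₀ then ψ d else 0) -
        lam * (if d = 0 then ψ d else 0) := by
    intro d
    rw [nsmul_eq_mul]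
    by_cases hd : d = 0
    · subst hd
      simp [diffCount_zero hg, S₀]
    by_cases hdS : d ∈ S₀
    · rw [hpds.1 d ((hS₀ d).1 hdS) hd, if_pos hdS, if_neg hd]
      ring
    · rw [hpds.2 d (mt (hS₀ d).2 hdS), if_neg hdS, if_neg hd]
      ring
  rw [sum_mul_conj_sum_eq_sum_sub, sum_sub_eq_sum_diffCount,
    Finset.sum_congr rfl fun d _ => hcount d,
    Finset.sum_sub_distrib, Finset.sum_add_distrib, ← Finset.mul_sum, ← Finset.mul_sum,
    ← Finset.mul_sum, AddChar.sum_eq_zero_of_ne_one hψ, Fintype.sum_ite_mem,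
    Fintype.sum_ite_eq', AddChar.map_zero_eq_one]
  ring

lemma IsPartialDifferenceSet.exists_sq_charSum_eq {lam mu : ℕ}
    (hpds : IsPartialDifferenceSet g lam mu) (hg : Function.Injective g) (hne : lam ≠ mu) :
    ∃ b c : ℂ, ∀ ψ : AddChar G ℂ, ψ ≠ 1 →
      (∑ j, ψ (g j)) ^ 2 = b * ∑ j, ψ (g j) + c := by
  obtain ⟨e, hinsert⟩ : ∃ e : ℝ, ∀ ψ : AddChar G ℂ,
      ∑ d ∈ insert 0 (Finset.univ.image g), ψ d = ∑ j, ψ (g j) + e := by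
    by_cases h0 : (0 : G) ∈ Set.range g
    · refine ⟨0, fun ψ => ?_⟩
      rw [Finset.insert_eq_of_mem (by simpa using h0), Finset.sum_image hg.injOn,
        Complex.ofReal_zero, add_zero]
    · refine ⟨1, fun ψ => ?_⟩
      rw [Finset.sum_insert (by simpa using h0), Finset.sum_image hg.injOn,
        AddChar.map_zero_eq_one, Complex.ofReal_one, add_comm]
  have hc : ((lam : ℝ) - mu) ≠ 0 := sub_ne_zero.2 (by exact_mod_cast hne)
  refine ⟨_, _, fun ψ hψ => Complex.sq_eq_of_mul_conj_eq (e := e) (r := m - lam) hc ?_⟩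
  rw [hpds.sum_mul_conj_sum hg hψ, hinsert]
  push_cast
  ring

end PartialDifferenceSet

section Reindexing

variable {G M : Type*} [DecidableEq G] [AddCommGroup M] {m m' : ℕ} {g : Fin m → G}
  {g' : Fin m' → G} (f : G → M)

lemma Function.Injective.sum_comp_eq_sum_toFinset_range (hg : Function.Injective g) :
    ∑ j, f (g j) = ∑ d ∈ (Set.range g).toFinset, f d := by
  rw [Set.toFinset_range, Finset.sum_image hg.injOn]

lemma sum_comp_eq_sub_of_range_eq_diff (hg : Function.Injective g) (hg' : Function.Injective g')
    {a : G} (ha : a ∈ Set.range g) (hrange : Set.range g' = Set.range g \ {a}) :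
    ∑ j, f (g' j) = ∑ j, f (g j) - f a := by
  rw [hg.sum_comp_eq_sum_toFinset_range, hg'.sum_comp_eq_sum_toFinset_range,
    Set.toFinset_congr hrange, Set.toFinset_sdiff, Set.toFinset_singleton,
    Finset.sdiff_singleton_eq_erase, Finset.sum_erase_eq_sub (Set.mem_toFinset.2 ha)]

lemma sum_comp_eq_add_of_range_eq_insert (hg : Function.Injective g)
    (hg' : Function.Injective g') {a : G} (ha : a ∉ Set.range g)
    (hrange : Set.range g' = insert a (Set.range g)) :
    ∑ j, f (g' j) = ∑ j, f (g j) + f a := by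
  rw [hg.sum_comp_eq_sum_toFinset_range, hg'.sum_comp_eq_sum_toFinset_range,
    Set.toFinset_congr hrange, Set.toFinset_insert,
    Finset.sum_insert (mt Set.mem_toFinset.1 ha), add_comm]

end Reindexing

theorem statement14_general {k m : ℕ} (nn : Fin k → ℕ) [∀ i, NeZero (nn i)]
    (g : Fin m → PiG nn) (hg : Function.Injective g) (lam mu : ℕ)
    (hlam : ∀ x ∈ insert (0 : PiG nn) (Set.range g), x ≠ 0 → diffCount g x = lam)
    (hmu : ∀ x : PiG nn, x ∉ insert (0 : PiG nn) (Set.range g) → diffCount g x = mu)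
    (hne : lam ≠ mu)
    (hbi : (anglesSet nn g).ncard = 2) :
    ((0 : PiG nn) ∈ Set.range g →
      ∀ g' : Fin (m - 1) → PiG nn, Function.Injective g' →
        Set.range g' = Set.range g \ {0} →
          (anglesSet nn g').ncard = 1 ∨ (anglesSet nn g').ncard = 2) ∧
    ((0 : PiG nn) ∉ Set.range g →
      ∀ g' : Fin (m + 1) → PiG nn, Function.Injective g' →
        Set.range g' = insert (0 : PiG nn) (Set.range g) →
          (anglesSet nn g').ncard = 1 ∨ (anglesSet nn g').ncard = 2) := by
  obtain ⟨b, c, hquad⟩ :=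
    IsPartialDifferenceSet.exists_sq_charSum_eq (g := g) ⟨hlam, hmu⟩ hg hne
  have hG : ∃ z : PiG nn, z ≠ 0 := by
    obtain ⟨_, x, y, hxy, -⟩ := Set.nonempty_of_ncard_ne_zero (hbi ▸ two_ne_zero)
    have : Nontrivial (PiG nn) := ⟨⟨x, y, hxy⟩⟩
    exact exists_ne 0
  have hshift : ∀ {m'} (g' : Fin m' → PiG nn) (δ : ℂ),
      (∀ z, ∑ j, rho nn (g' j) z = ∑ j, rho nn (g j) z + δ) →
        (anglesSet nn g').ncard = 1 ∨ (anglesSet nn g').ncard = 2 := by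
    intro m' g' δ hδ
    have hle := ncard_anglesSet_le_two nn g' (b + 2 * δ) (c - δ ^ 2 - b * δ) fun z hz => by
      have := hquad (rhoChar nn z) (rhoChar_ne_one nn hz)
      simp only [rhoChar_apply, rho_comm nn z] at this
      rw [hδ]
      linear_combination this
    have hpos := ncard_anglesSet_pos nn g' hG
    omega
  refine ⟨fun h0 g' hg' hrange => hshift g' (-1) fun z => ?_,
    fun h0 g' hg' hrange => hshift g' 1 fun z => ?_⟩
  · rw [sum_comp_eq_sub_of_range_eq_diff (rho nn · z) hg hg' h0 hrange, rho_zero_left,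
      sub_eq_add_neg]
  · rw [sum_comp_eq_add_of_range_eq_insert (rho nn · z) hg hg' h0 hrange, rho_zero_left]

/-- Let `S` be an `(n, m, λ, μ)`-partial difference set for `G` with
`λ ≠ μ`, and let `F` be the (biangular) `G`-harmonic frame for `ℂ^m` generated by `S`.
Then: (1) if `0 ∈ S`, the `G`-harmonic frame for `ℂ^{m-1}` generated by `S \ {0}` is
either equiangular or biangular; and (2) if `0 ∉ S`, the `G`-harmonic frame for `ℂ^{m+1}`
generated by `S ∪ {0}` is either equiangular or biangular. -/
theorem statement14 {k m : ℕ} (nn : Fin k → ℕ) [∀ i, NeZero (nn i)] (hm : 0 < m)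
    (g : Fin m → PiG nn) (hg : Function.Injective g) (lam mu : ℕ)
    (hlam : ∀ x ∈ insert (0 : PiG nn) (Set.range g), x ≠ 0 → diffCount g x = lam)
    (hmu : ∀ x : PiG nn, x ∉ insert (0 : PiG nn) (Set.range g) → diffCount g x = mu)
    (hne : lam ≠ mu)
    (hbi : (anglesSet nn g).ncard = 2) :
    ((0 : PiG nn) ∈ Set.range g →
      ∀ g' : Fin (m - 1) → PiG nn, Function.Injective g' →
        Set.range g' = Set.range g \ {0} →
          (anglesSet nn g').ncard = 1 ∨ (anglesSet nn g').ncard = 2) ∧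
    ((0 : PiG nn) ∉ Set.range g →
      ∀ g' : Fin (m + 1) → PiG nn, Function.Injective g' →
        Set.range g' = insert (0 : PiG nn) (Set.range g) →
          (anglesSet nn g').ncard = 1 ∨ (anglesSet nn g').ncard = 2) :=
  statement14_general nn g hg lam mu hlam hmu hne hbi
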